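/- arXiv:2012.15434 — 2 statements merged into one kernel-verified Lean document; each statement's English description precedes it below -/
import Mathlib

section
/- The number of monic square-free polynomials of degree n ≥ 2 over 𝔽_q equals q^n - q^{n-1}. -/
/-!
Every monic polynomial factors uniquely as `g * h ^ 2` with `g` squarefree and `g`, `h` monic.
Sorting the monic polynomials of degree `n` by `d = deg h` gives
`q ^ n = ∑_{2d ≤ n} s(n - 2d) q ^ d`, where `s(m)` counts the squarefree monic polynomials of
degree `m`. The terms with `d ≥ 1` are `q` times the same sum for `n - 2`, i.e. `q * q ^ (n - 2)`,
so `s(n) = q ^ n - q ^ (n - 1)`.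
-/

section UniqueFactorizationMonoid

variable {α : Type*} [CommMonoidWithZero α] [UniqueFactorizationMonoid α]

theorem Prime.dvd_of_squarefree_mul_sq_eq {p g₁ g₂ h₁ h₂ : α} (hp : Prime p)
    (hg₂ : Squarefree g₂) (h : g₁ * h₁ ^ 2 = g₂ * h₂ ^ 2) (hph₁ : p ∣ h₁) : p ∣ h₂ := by
  have hsq : p ^ (1 + 1) ∣ g₂ * h₂ ^ 2 := h ▸ dvd_mul_of_dvd_right (pow_dvd_pow_of_dvd hph₁ 2) g₁
  exact hp.dvd_of_dvd_pow (pow_one p ▸ hg₂.pow_dvd_of_squarefree_of_pow_succ_dvd_mul_right hp hsq)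

theorem associated_of_squarefree_mul_sq_eq {g₁ g₂ h₁ h₂ : α} (hg₁ : Squarefree g₁)
    (hg₂ : Squarefree g₂) (hh₁ : h₁ ≠ 0) (h : g₁ * h₁ ^ 2 = g₂ * h₂ ^ 2) : Associated h₁ h₂ := by
  have : Nontrivial α := ⟨⟨h₁, 0, hh₁⟩⟩
  induction h₁ using UniqueFactorizationMonoid.induction_on_prime generalizing h₂ with
  | h₁ => exact absurd rfl hh₁
  | h₂ u hu =>
    have hh₂ : h₂ ≠ 0 := by
      rintro rfl
      simp [hg₁.ne_zero, hu.ne_zero] at h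
    have hu₂ : IsUnit h₂ := by
      by_contra hu₂
      obtain ⟨p, hp, hph₂⟩ := WfDvdMonoid.exists_irreducible_factor hu₂ hh₂
      have hp := UniqueFactorizationMonoid.irreducible_iff_prime.mp hp
      exact hp.not_isUnit (isUnit_of_dvd_unit (hp.dvd_of_squarefree_mul_sq_eq hg₁ h.symm hph₂) hu)
    exact (associated_one_iff_isUnit.mpr hu).trans (associated_one_iff_isUnit.mpr hu₂).symm
  | h₃ a p ha hp ih =>
    obtain ⟨b, rfl⟩ := hp.dvd_of_squarefree_mul_sq_eq hg₂ h (dvd_mul_right p a)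
    have hab : g₁ * a ^ 2 = g₂ * b ^ 2 := by
      refine mul_left_cancel₀ (pow_ne_zero 2 hp.ne_zero) ?_
      simp only [mul_pow] at h
      rw [mul_left_comm, h, mul_left_comm]
    exact (ih ha hab).mul_left p

theorem exists_squarefree_mul_sq_eq {x : α} (hx : x ≠ 0) :
    ∃ g h : α, Squarefree g ∧ x = g * h ^ 2 := by
  induction x using UniqueFactorizationMonoid.induction_on_prime with
  | h₁ => exact absurd rfl hx
  | h₂ u hu => exact ⟨u, 1, hu.squarefree, by rw [one_pow, mul_one]⟩
  | h₃ a p ha hp ih =>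
    obtain ⟨g, h, hg, rfl⟩ := ih ha
    by_cases hpg : p ∣ g
    · obtain ⟨g', rfl⟩ := hpg
      exact ⟨g', p * h, hg.of_mul_right, by rw [mul_pow, sq p]; ac_rfl⟩
    · have hpg' : IsRelPrime p g := hp.irreducible.isRelPrime_iff_not_dvd.mpr hpg
      exact ⟨p * g, h, squarefree_mul_iff.mpr ⟨hpg', hp.squarefree, hg⟩, (mul_assoc p g _).symm⟩

end UniqueFactorizationMonoid

namespace Polynomial

abbrev MonicOfDegree (R : Type*) [Semiring R] (n : ℕ) := {f : R[X] // f.Monic ∧ f.natDegree = n}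

abbrev SquarefreeMonicOfDegree (R : Type*) [Semiring R] (n : ℕ) :=
  {f : R[X] // f.Monic ∧ f.natDegree = n ∧ Squarefree f}

section Counting

variable {R : Type*} [Semiring R] [Nontrivial R] [Fintype R]

noncomputable def monicOfDegreeEquiv (n : ℕ) : MonicOfDegree R n ≃ (Fin n → R) :=
  (monicEquivDegreeLT n).trans (degreeLTEquiv R n).toEquiv

instance (n : ℕ) : Finite (MonicOfDegree R n) := .of_equiv _ (monicOfDegreeEquiv n).symm

instance (n : ℕ) : Finite (SquarefreeMonicOfDegree R n) :=
  .of_injective (fun f ↦ (⟨f.1, f.2.1, f.2.2.1⟩ : MonicOfDegree R n))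
    fun _ _ h ↦ Subtype.ext (congrArg (fun f : MonicOfDegree R n ↦ f.1) h)

theorem card_monicOfDegree (n : ℕ) : Nat.card (MonicOfDegree R n) = Fintype.card R ^ n := by
  rw [Nat.card_congr (monicOfDegreeEquiv n), Nat.card_eq_fintype_card, Fintype.card_fun,
    Fintype.card_fin]

end Counting

section Field

variable {k : Type*} [Field k]

theorem Monic.exists_squarefree_mul_sq_eq {f : k[X]} (hf : f.Monic) :
    ∃ g h : k[X], g.Monic ∧ Squarefree g ∧ h.Monic ∧ f = g * h ^ 2 := by
  classical
  obtain ⟨g, h, hg, rfl⟩ := _root_.exists_squarefree_mul_sq_eq hf.ne_zero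
  have hh : h ≠ 0 := by rintro rfl; simp at hf
  set u : k[X]ˣ := normUnit h
  have hgh : g * h ^ 2 = (g * ↑(u⁻¹ ^ 2)) * normalize h ^ 2 := by
    rw [normalize_apply, mul_pow, mul_mul_mul_comm, ← Units.val_pow_eq_pow_val, ← Units.val_mul,
      ← mul_pow, inv_mul_cancel, one_pow, Units.val_one, mul_one]
  have hhn : (normalize h).Monic := monic_normalize hh
  rw [hgh] at hf ⊢
  exact ⟨_, _, (hhn.pow 2).of_mul_monic_right hf,
    (associated_mul_unit_right g _ (Units.isUnit _)).squarefree_iff.mp hg, hhn, rfl⟩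

theorem eq_of_squarefree_mul_sq_eq {g₁ g₂ h₁ h₂ : k[X]} (hg₁ : Squarefree g₁)
    (hg₂ : Squarefree g₂) (hh₁ : h₁.Monic) (hh₂ : h₂.Monic) (h : g₁ * h₁ ^ 2 = g₂ * h₂ ^ 2) :
    g₁ = g₂ ∧ h₁ = h₂ := by
  obtain rfl := eq_of_monic_of_associated hh₁ hh₂
    (associated_of_squarefree_mul_sq_eq hg₁ hg₂ hh₁.ne_zero h)
  exact ⟨mul_right_cancel₀ (pow_ne_zero 2 hh₁.ne_zero) h, rfl⟩

noncomputable def squarefreeMulSq (n : ℕ) :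
    (Σ d : Fin (n / 2 + 1), SquarefreeMonicOfDegree k (n - 2 * d) × MonicOfDegree k d) →
      MonicOfDegree k n := fun ⟨d, g, h⟩ ↦
  ⟨g.1 * h.1 ^ 2, g.2.1.mul (h.2.1.pow 2), by
    rw [g.2.1.natDegree_mul (h.2.1.pow 2), natDegree_pow, g.2.2.1, h.2.2]
    omega⟩

theorem bijective_squarefreeMulSq (n : ℕ) : Function.Bijective (squarefreeMulSq (k := k) n) := by
  constructor
  · rintro ⟨d₁, ⟨g₁, _, _, hg₁⟩, ⟨h₁, hh₁, hh₁d⟩⟩ ⟨d₂, ⟨g₂, _, _, hg₂⟩, ⟨h₂, hh₂, hh₂d⟩⟩ hprod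
    obtain ⟨rfl, rfl⟩ := eq_of_squarefree_mul_sq_eq hg₁ hg₂ hh₁ hh₂ (congrArg Subtype.val hprod)
    obtain rfl : d₁ = d₂ := Fin.ext (hh₁d.symm.trans hh₂d)
    rfl
  · rintro ⟨f, hf, rfl⟩
    obtain ⟨g, h, hg, hgs, hh, rfl⟩ := hf.exists_squarefree_mul_sq_eq
    have hdeg : (g * h ^ 2).natDegree = g.natDegree + 2 * h.natDegree := by
      rw [hg.natDegree_mul (hh.pow 2), natDegree_pow]
    exact ⟨⟨⟨h.natDegree, by omega⟩, ⟨g, hg, by simp only; omega, hgs⟩, ⟨h, hh, rfl⟩⟩, rfl⟩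

variable [Fintype k]

theorem pow_card_eq_sum_card_squarefreeMonicOfDegree (n : ℕ) :
    Fintype.card k ^ n = ∑ d ∈ Finset.range (n / 2 + 1),
      Nat.card (SquarefreeMonicOfDegree k (n - 2 * d)) * Fintype.card k ^ d := by
  rw [← card_monicOfDegree, ← Nat.card_congr (Equiv.ofBijective _ (bijective_squarefreeMulSq n)),
    Nat.card_sigma, ← Fin.sum_univ_eq_sum_range]
  simp only [Nat.card_prod, card_monicOfDegree]

theorem card_squarefreeMonicOfDegree_add_pow_card (n : ℕ) :
    Nat.card (SquarefreeMonicOfDegree k (n + 2)) + Fintype.card k ^ (n + 1) =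
      Fintype.card k ^ (n + 2) := by
  rw [pow_card_eq_sum_card_squarefreeMonicOfDegree (n + 2), Finset.sum_range_succ',
    pow_succ, pow_card_eq_sum_card_squarefreeMonicOfDegree n, Finset.sum_mul,
    show (n + 2) / 2 = n / 2 + 1 by omega]
  simp only [mul_zero, Nat.sub_zero, pow_zero, mul_one, add_comm]
  congr 1
  refine Finset.sum_congr rfl fun d _ ↦ ?_
  rw [show n + 2 - 2 * (d + 1) = n - 2 * d by omega, pow_succ, mul_assoc]

end Field

end Polynomial

/-- The number of monic squarefree polynomials of degree `n ≥ 2` over `𝔽_q`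
equals `q^n - q^(n-1)`. -/
theorem stmt_5 (k : Type) [Field k] [Fintype k] (n : ℕ) (hn : 2 ≤ n) :
    Nat.card { f : Polynomial k // f.Monic ∧ f.natDegree = n ∧ Squarefree f } =
      Fintype.card k ^ n - Fintype.card k ^ (n - 1) := by
  obtain ⟨m, rfl⟩ := Nat.exists_eq_add_of_le' hn
  rw [show m + 2 - 1 = m + 1 by omega]
  exact Nat.eq_sub_of_add_eq (Polynomial.card_squarefreeMonicOfDegree_add_pow_card m)
end

section
/- Let A be a central hyperplane arrangement in a vector space of dimension d over 𝔽_q with intersection poset L_A ordered by reverse inclusion, with minimum element 0̂ the ambient space. Then the number of 𝔽_q-points of the complement X of the arrangement equals ∑_{y ∈ L_A} μ(0̂, y) q^{d − rk(y)}, where μ is the Möbius function of L_A and rk(y) is the codimension of y. -/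
open Finset
open scoped Classical

/-!
For each point `v`, the members of `A` through `v` cut out the smallest flat containing `v`,
so the flats containing `v` are exactly those above it in `L`. The Möbius recursion then
makes `∑_{y ∋ v} μ y` the indicator of `v` lying on no hyperplane (the flat through such a
point is the empty intersection `⊤`, since no hyperplane is `⊤`). Summing over `v` and
exchanging the sums gives `∑_y μ y · |y|`, and `|y| = q ^ dim y`.
-/

namespace Submodule

variable {R M : Type*} [Semiring R] [AddCommMonoid M] [Module R M]

noncomputable def flatThrough (A : Finset (Submodule R M)) (v : M) : Submodule R M :=
  (A.filter (v ∈ ·)).inf id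

lemma mem_flatThrough (A : Finset (Submodule R M)) (v : M) : v ∈ flatThrough A v :=
  mem_finsetInf.2 fun _ hH => (mem_filter.1 hH).2

lemma flatThrough_le_inf_iff {A s : Finset (Submodule R M)} (hs : s ⊆ A) (v : M) :
    flatThrough A v ≤ s.inf id ↔ v ∈ s.inf id :=
  ⟨fun h => h (mem_flatThrough A v), fun hv =>
    Finset.inf_mono fun H hH => mem_filter.2 ⟨hs hH, mem_finsetInf.1 hv H hH⟩⟩

lemma flatThrough_eq_top_iff {A : Finset (Submodule R M)} (hA : ∀ H ∈ A, H ≠ ⊤) (v : M) :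
    flatThrough A v = ⊤ ↔ ∀ H ∈ A, v ∉ H := by
  rw [flatThrough, Finset.inf_eq_top_iff]
  simp only [mem_filter, id]
  exact ⟨fun h H hH hv => hA H hH (h H ⟨hH, hv⟩), fun h H ⟨hH, hv⟩ => absurd hv (h H hH)⟩

variable {S : Type*} [Ring S] {A L : Finset (Submodule R M)} {μ : Submodule R M → S}

theorem sum_mobius_of_mem_eq_ite (hA : ∀ H ∈ A, H ≠ ⊤)
    (hL : ∀ W, W ∈ L ↔ ∃ s ∈ A.powerset, W = s.inf id)
    (hμ : ∀ y ∈ L, ∑ z ∈ L.filter (fun z => y ≤ z), μ z = if y = ⊤ then 1 else 0) (v : M) :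
    ∑ y ∈ L.filter (fun y => v ∈ y), μ y = if ∀ H ∈ A, v ∉ H then 1 else 0 := by
  have hflat : flatThrough A v ∈ L := (hL _).2 ⟨_, mem_powerset.2 (filter_subset _ _), rfl⟩
  have hfilter : L.filter (fun y => v ∈ y) = L.filter (fun z => flatThrough A v ≤ z) :=
    filter_congr fun y hy => by
      obtain ⟨s, hs, rfl⟩ := (hL y).1 hy
      exact (flatThrough_le_inf_iff (mem_powerset.1 hs) v).symm
  rw [hfilter, hμ _ hflat]
  simp only [flatThrough_eq_top_iff hA]

theorem card_compl_eq_sum_mobius_mul_card [Fintype M] (hA : ∀ H ∈ A, H ≠ ⊤)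
    (hL : ∀ W, W ∈ L ↔ ∃ s ∈ A.powerset, W = s.inf id)
    (hμ : ∀ y ∈ L, ∑ z ∈ L.filter (fun z => y ≤ z), μ z = if y = ⊤ then 1 else 0) :
    (Nat.card {v : M // ∀ H ∈ A, v ∉ H} : S) = ∑ y ∈ L, μ y * Nat.card y := by
  calc (Nat.card {v : M // ∀ H ∈ A, v ∉ H} : S)
      = ∑ v : M, if ∀ H ∈ A, v ∉ H then 1 else 0 := by
        rw [Nat.card_eq_fintype_card, Fintype.card_subtype, sum_boole]
    _ = ∑ v : M, ∑ y ∈ L.filter (fun y => v ∈ y), μ y := by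
        simp only [sum_mobius_of_mem_eq_ite hA hL hμ]
        congr!
    _ = ∑ y ∈ L, ∑ v ∈ univ.filter (fun v => v ∈ y), μ y := by
        simp only [sum_filter]
        exact sum_comm
    _ = ∑ y ∈ L, μ y * Nat.card y :=
        sum_congr rfl fun y _ => by
          rw [sum_const, ← Fintype.card_subtype, ← Nat.card_eq_fintype_card, nsmul_eq_mul']

end Submodule

/-- Whitney/Möbius counting for a central hyperplane arrangement `A` in `𝔽_q^d`:
letting `L` be the intersection poset of `A` (intersections of subcollections,
ordered by reverse inclusion, with minimum the ambient space `⊤`) and `μ y` the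
Möbius function values `μ(0̂, y)` (characterized by the usual recursion), the number
of points of the complement of the arrangement is
`∑_{y ∈ L} μ(0̂,y) q^{d - rk y}`, where `rk y = d - dim y` is the codimension. -/
theorem stmt_6 (k : Type) [Field k] [Fintype k] (d : ℕ)
    (A : Finset (Submodule k (Fin d → k)))
    (hA : ∀ H ∈ A, Module.finrank k H = d - 1 ∧ H ≠ ⊤)
    (L : Finset (Submodule k (Fin d → k)))
    (hL : ∀ W, W ∈ L ↔ ∃ s ∈ A.powerset, W = s.inf id)
    (μ : Submodule k (Fin d → k) → ℤ)
    (hμ : ∀ y ∈ L, ∑ z ∈ L.filter (fun z => y ≤ z), μ z = if y = ⊤ then 1 else 0) :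
    (Nat.card { v : Fin d → k // ∀ H ∈ A, v ∉ H } : ℤ) =
      ∑ y ∈ L, μ y * (Fintype.card k : ℤ) ^ (d - (d - Module.finrank k y)) := by
  rw [Submodule.card_compl_eq_sum_mobius_mul_card (fun H hH => (hA H hH).2) hL hμ]
  refine sum_congr rfl fun y _ => ?_
  have hdim : Module.finrank k y ≤ d := y.finrank_le.trans_eq (Module.finrank_fin_fun k)
  rw [Nat.card_eq_fintype_card, Module.card_eq_pow_finrank (K := k), Nat.sub_sub_self hdim]
  push_cast
  rfl
end
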